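/- Let φ, ψ : ℝ² → ℝ be continuous, compactly supported, radially symmetric functions. Then for every L > 0: ∫_{[−L,L]²} (∂₁G_{ℝ²} ∗ φ)(x) (∂₂G_{ℝ²} ∗ ψ)(x) dx = 0, where the convolutions are over ℝ². -/
import Mathlib

open MeasureTheory

noncomputable section

/-- the square [−L,L]². -/
def sqD (L : ℝ) : Set (ℝ × ℝ) := Set.Icc (-L) L ×ˢ Set.Icc (-L) L

/-- partial derivatives of the Green function on ℝ²: ∂ᵢG_{ℝ²}(x) = −(1/2π) xᵢ/|x|². -/
def diG (i : Fin 2) (x : ℝ × ℝ) : ℝ :=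
  -(1/(2*Real.pi)) * (![x.1, x.2] i) / (x.1^2 + x.2^2)

/-- convolution on ℝ². -/
def convR (f g : ℝ × ℝ → ℝ) (x : ℝ × ℝ) : ℝ := ∫ y, f (x - y) * g y

/-- radial symmetry: the value depends only on |x|. -/
def Radial (f : ℝ × ℝ → ℝ) : Prop :=
  ∀ x y : ℝ × ℝ, x.1^2 + x.2^2 = y.1^2 + y.2^2 → f x = f y

/-- the reflection (x₁,x₂) ↦ (x₁,−x₂) as a measurable equiv. -/
def refl2 : (ℝ × ℝ) ≃ᵐ (ℝ × ℝ) :=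
  (MeasurableEquiv.refl ℝ).prodCongr (MeasurableEquiv.neg ℝ)

lemma refl2_apply (x : ℝ × ℝ) : refl2 x = (x.1, -x.2) := rfl

lemma refl2_mp : MeasurePreserving refl2 (volume : Measure (ℝ × ℝ)) volume := by
  have h : MeasurePreserving (Prod.map (id : ℝ → ℝ) (Neg.neg : ℝ → ℝ))
      ((volume : Measure ℝ).prod volume) ((volume : Measure ℝ).prod volume) :=
    (MeasurePreserving.id volume).prod (Measure.measurePreserving_neg volume)
  rw [Measure.volume_eq_prod]
  exact h

lemma radial_refl2 {f : ℝ × ℝ → ℝ} (hf : Radial f) (x : ℝ × ℝ) :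
    f (x.1, -x.2) = f x := hf _ _ (by ring)

lemma diG0_refl2 (x : ℝ × ℝ) : diG 0 (x.1, -x.2) = diG 0 x := by
  simp [diG]

lemma diG1_refl2 (x : ℝ × ℝ) : diG 1 (x.1, -x.2) = -diG 1 x := by
  simp [diG]
  ring_nf

lemma conv_even (φ : ℝ × ℝ → ℝ) (hφr : Radial φ) (x : ℝ × ℝ) :
    convR (diG 0) φ (x.1, -x.2) = convR (diG 0) φ x := by
  unfold convR
  rw [← refl2_mp.integral_comp refl2.measurableEmbedding
    (fun y => diG 0 ((x.1, -x.2) - y) * φ y)]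
  congr 1; ext y
  have h1 : (x.1, -x.2) - refl2 y = ((x - y).1, -(x - y).2) := by
    simp [refl2_apply, Prod.ext_iff]; ring
  rw [h1, diG0_refl2, refl2_apply, radial_refl2 hφr]

lemma conv_odd (ψ : ℝ × ℝ → ℝ) (hψr : Radial ψ) (x : ℝ × ℝ) :
    convR (diG 1) ψ (x.1, -x.2) = -convR (diG 1) ψ x := by
  unfold convR
  rw [← refl2_mp.integral_comp refl2.measurableEmbedding
    (fun y => diG 1 ((x.1, -x.2) - y) * ψ y), ← integral_neg]
  congr 1; ext y
  have h1 : (x.1, -x.2) - refl2 y = ((x - y).1, -(x - y).2) := by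
    simp [refl2_apply, Prod.ext_iff]; ring
  rw [h1, diG1_refl2, refl2_apply, radial_refl2 hψr]; ring

/-- for continuous, compactly supported, radially symmetric φ, ψ
and every L > 0, `∫_{[−L,L]²} (∂₁G_{ℝ²}∗φ)(x) (∂₂G_{ℝ²}∗ψ)(x) dx = 0`. -/
theorem statement14
    (φ ψ : ℝ × ℝ → ℝ)
    (hφc : Continuous φ) (hφs : HasCompactSupport φ) (hφr : Radial φ)
    (hψc : Continuous ψ) (hψs : HasCompactSupport ψ) (hψr : Radial ψ)
    (L : ℝ) (hL : 0 < L) :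
    (∫ x in sqD L, convR (diG 0) φ x * convR (diG 1) ψ x) = 0 := by
  set F : ℝ × ℝ → ℝ := fun x => convR (diG 0) φ x * convR (diG 1) ψ x with hF
  have hpre : refl2 ⁻¹' sqD L = sqD L := by
    ext x
    simp only [Set.mem_preimage, refl2_apply, sqD, Set.mem_prod, Set.mem_Icc]
    constructor <;> rintro ⟨h1, h2, h3⟩ <;> exact ⟨h1, by linarith, by linarith⟩
  have key : (∫ x in sqD L, F x) = ∫ x in sqD L, -F x := by
    rw [← refl2_mp.setIntegral_preimage_emb refl2.measurableEmbedding F (sqD L), hpre]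
    congr 1; ext x
    simp only [hF, Function.comp, refl2_apply, conv_even φ hφr, conv_odd ψ hψr]
    ring
  rw [integral_neg] at key
  linarith
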